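/- Let k ∈ ℕ ∪ {0}, Z ∈ ℝ, h̃ ∈ C^k([0,∞)), and let ρ̃ ∈ C²([0,∞)) satisfy, for all r ≥ 0, ρ̃''(r) = 2[ h̃(r) − ∫₀¹ (Z ρ̃'(rσ) + 2 h̃(rσ)) σ² dσ ]. Then ρ̃ ∈ C^{k+2}([0,∞)), and for all r ≥ 0 the identity ρ̃^{(k+2)}(r) = 2[ h̃^{(k)}(r) − ∫₀¹ (Z ρ̃^{(k+1)}(rσ) + 2 h̃^{(k)}(rσ)) σ^{k+2} dσ ] holds; consequently ρ̃^{(k+2)}(0) = (2/(k+3))·[(k+1) h̃^{(k)}(0) − Z ρ̃^{(k+1)}(0)]. -/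

import Mathlib

/-!
Differentiating `r ↦ ∫₀¹ w(rσ) σ^m dσ` under the integral sign gives `∫₀¹ w'(rσ) σ^(m+1) dσ`.
Hence, if the identity holds at level `k`, its right-hand side is `C¹` on `[0,∞)` with derivative
the right-hand side at level `k + 1`; so `ρ^(k+2)` is `C¹` and the identity passes to `k + 1`.
Near `r = 0` only one-sided derivatives are available, so `w` is first extended to a `C¹`
function on `ℝ` by its tangent line at `0`, where the dominated differentiation theorem applies.
At `r = 0` the integral is `w(0) / (m + 1)`, which gives the value of `ρ^(k+2)(0)`.
-/

open Set MeasureTheory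

theorem hasDerivWithinAt_iteratedDerivWithin {𝕜 F : Type*} [NontriviallyNormedField 𝕜]
    [NormedAddCommGroup F] [NormedSpace 𝕜 F] {n : WithTop ℕ∞} {m : ℕ} {f : 𝕜 → F} {s : Set 𝕜}
    {x : 𝕜} (hf : ContDiffOn 𝕜 n f s) (hmn : m < n) (hs : UniqueDiffOn 𝕜 s) (hx : x ∈ s) :
    HasDerivWithinAt (iteratedDerivWithin m f s) (iteratedDerivWithin (m + 1) f s x) s x := by
  rw [iteratedDerivWithin_succ]
  exact (hf.differentiableOn_iteratedDerivWithin hmn hs x hx).hasDerivWithinAt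

theorem contDiffOn_one_of_hasDerivWithinAt {𝕜 F : Type*} [NontriviallyNormedField 𝕜]
    [NormedAddCommGroup F] [NormedSpace 𝕜 F] {f f' : 𝕜 → F} {s : Set 𝕜}
    (hs : UniqueDiffOn 𝕜 s) (hf : ∀ x ∈ s, HasDerivWithinAt f (f' x) s x)
    (hf' : ContinuousOn f' s) : ContDiffOn 𝕜 1 f s :=
  (contDiffOn_one_iff_derivWithin hs).2 ⟨fun x hx => (hf x hx).differentiableWithinAt,
    hf'.congr fun x hx => (hf x hx).derivWithin (hs x hx)⟩

theorem exists_hasDerivAt_extension_Ici {E : Type*} [NormedAddCommGroup E] [NormedSpace ℝ E]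
    {a : ℝ} {g g' : ℝ → E} (hg : ∀ x ∈ Ici a, HasDerivWithinAt g (g' x) (Ici a) x) :
    ∃ G : ℝ → E, EqOn G g (Ici a) ∧ ∀ x, HasDerivAt G (g' (max x a)) x := by
  let L : ℝ → E := fun x => g a + (x - a) • g' a
  let G : ℝ → E := fun x => if a ≤ x then g x else L x
  have hGg : EqOn G g (Ici a) := fun x hx => if_pos hx
  have hGL : EqOn G L (Iic a) := fun x hx => by
    rcases (mem_Iic.1 hx).eq_or_lt with rfl | hlt
    · simp [G, L]
    · simp [G, not_le.2 hlt]
  have hleft : ∀ x ∈ Iic a, HasDerivWithinAt G (g' a) (Iic a) x := fun x hx =>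
    (((hasDerivAt_id x).sub_const a).smul_const (g' a) |>.const_add (g a)
      |>.hasDerivWithinAt.congr hGL (hGL hx)).congr_deriv (by simp)
  have hright : ∀ x ∈ Ici a, HasDerivWithinAt G (g' x) (Ici a) x := fun x hx =>
    (hg x hx).congr hGg (hGg hx)
  refine ⟨G, hGg, fun x => ?_⟩
  rcases lt_trichotomy x a with hlt | rfl | hgt
  · rw [max_eq_right hlt.le]
    exact (hleft x hlt.le).hasDerivAt (Iic_mem_nhds hlt)
  · rw [max_self, ← hasDerivWithinAt_univ, ← Iic_union_Ici]
    exact (hleft x self_mem_Iic).union (hright x self_mem_Ici)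
  · rw [max_eq_left hgt.le]
    exact (hright x hgt.le).hasDerivAt (Ici_mem_nhds hgt)

noncomputable def scaledMoment (w : ℝ → ℝ) (m : ℕ) (r : ℝ) : ℝ :=
  ∫ σ in (0:ℝ)..1, w (r * σ) * σ ^ m

theorem continuous_scaledMoment {W : ℝ → ℝ} (hW : Continuous W) (m : ℕ) :
    Continuous (scaledMoment W m) :=
  intervalIntegral.continuous_parametric_intervalIntegral_of_continuous' (by fun_prop) 0 1

theorem hasDerivAt_scaledMoment {W W' : ℝ → ℝ} (hW : ∀ x, HasDerivAt W (W' x) x)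
    (hW' : Continuous W') (m : ℕ) (x₀ : ℝ) :
    HasDerivAt (scaledMoment W m) (scaledMoment W' (m + 1) x₀) x₀ := by
  have hWc : Continuous W := continuous_iff_continuousAt.2 fun x => (hW x).continuousAt
  obtain ⟨C, hC⟩ : ∃ C, ∀ p ∈ Metric.closedBall x₀ 1 ×ˢ Icc (0:ℝ) 1,
      ‖W' (p.1 * p.2) * p.2 ^ (m + 1)‖ ≤ C :=
    (isCompact_closedBall x₀ 1).prod isCompact_Icc |>.exists_bound_of_continuousOn (by fun_prop)
  refine (intervalIntegral.hasDerivAt_integral_of_dominated_loc_of_deriv_le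
    (F := fun x σ => W (x * σ) * σ ^ m) (F' := fun x σ => W' (x * σ) * σ ^ (m + 1))
    (a := 0) (b := 1) (μ := volume) (bound := fun _ => C)
    (Metric.ball_mem_nhds x₀ one_pos) ?_ ?_ ?_ ?_ intervalIntegrable_const ?_).2
  · exact .of_forall fun x => (by fun_prop : Continuous _).aestronglyMeasurable
  · exact (by fun_prop : Continuous _).intervalIntegrable 0 1
  · exact (by fun_prop : Continuous _).aestronglyMeasurable
  · refine ae_of_all _ fun σ hσ x hx => hC (x, σ) ⟨Metric.ball_subset_closedBall hx, ?_⟩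
    rw [uIoc_of_le zero_le_one] at hσ
    exact Ioc_subset_Icc_self hσ
  · refine ae_of_all _ fun σ _ x _ => ?_
    exact ((hW (x * σ)).comp x ((hasDerivAt_id x).mul_const σ)).mul_const (σ ^ m)
      |>.congr_deriv (by ring)

theorem scaledMoment_congr_Ici {v w : ℝ → ℝ} (h : EqOn v w (Ici 0)) (m : ℕ) {r : ℝ}
    (hr : r ∈ Ici 0) : scaledMoment v m r = scaledMoment w m r :=
  intervalIntegral.integral_congr fun σ hσ => by
    rw [uIcc_of_le zero_le_one] at hσ
    simp only [h (mul_nonneg hr hσ.1)]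

theorem scaledMoment_zero (w : ℝ → ℝ) (m : ℕ) : scaledMoment w m 0 = w 0 / (m + 1) := by
  simp [scaledMoment, integral_pow, div_eq_mul_inv]

theorem eqOn_comp_max_Ici (w : ℝ → ℝ) : EqOn w (fun t => w (max t 0)) (Ici 0) :=
  fun _ ht => by simp only [max_eq_left (mem_Ici.1 ht)]

theorem continuousOn_scaledMoment_Ici {w : ℝ → ℝ} (hw : ContinuousOn w (Ici 0)) (m : ℕ) :
    ContinuousOn (scaledMoment w m) (Ici 0) :=
  (continuous_scaledMoment (hw.comp_continuous (continuous_id.max continuous_const)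
    fun t => le_max_right t 0) m).continuousOn.congr
    fun _ hr => scaledMoment_congr_Ici (eqOn_comp_max_Ici w) m hr

theorem hasDerivWithinAt_scaledMoment_Ici {w w' : ℝ → ℝ}
    (hw : ∀ t ∈ Ici 0, HasDerivWithinAt w (w' t) (Ici 0) t) (hw' : ContinuousOn w' (Ici 0))
    (m : ℕ) {r : ℝ} (hr : r ∈ Ici 0) :
    HasDerivWithinAt (scaledMoment w m) (scaledMoment w' (m + 1) r) (Ici 0) r := by
  obtain ⟨W, hWw, hW⟩ := exists_hasDerivAt_extension_Ici hw
  have hW' : Continuous fun t => w' (max t 0) :=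
    hw'.comp_continuous (continuous_id.max continuous_const) fun t => le_max_right t 0
  have hderiv := (hasDerivAt_scaledMoment hW hW' m r).hasDerivWithinAt (s := Ici 0)
  rw [← scaledMoment_congr_Ici (eqOn_comp_max_Ici w') _ hr] at hderiv
  exact hderiv.congr (fun _ hx => scaledMoment_congr_Ici hWw.symm m hx)
    (scaledMoment_congr_Ici hWw.symm m hr)

def HigherDerivIdentity (Z : ℝ) (ρ h : ℝ → ℝ) (k : ℕ) : Prop :=
  ∀ r ∈ Ici (0:ℝ), iteratedDerivWithin (k + 2) ρ (Ici 0) r =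
    2 * (iteratedDerivWithin k h (Ici 0) r -
      scaledMoment (fun t => Z * iteratedDerivWithin (k + 1) ρ (Ici 0) t +
        2 * iteratedDerivWithin k h (Ici 0) t) (k + 2) r)

theorem HigherDerivIdentity.succ {Z : ℝ} {ρ h : ℝ → ℝ} {k : ℕ}
    (hh : ContDiffOn ℝ (k + 1) h (Ici 0)) (hρ : ContDiffOn ℝ (k + 2) ρ (Ici 0))
    (hk : HigherDerivIdentity Z ρ h k) :
    ContDiffOn ℝ (k + 3) ρ (Ici 0) ∧ HigherDerivIdentity Z ρ h (k + 1) := by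
  have hs := uniqueDiffOn_Ici (0:ℝ)
  set w' := fun t =>
    Z * iteratedDerivWithin (k + 2) ρ (Ici 0) t + 2 * iteratedDerivWithin (k + 1) h (Ici 0) t
  have hw : ∀ t ∈ Ici (0:ℝ), HasDerivWithinAt (fun t =>
      Z * iteratedDerivWithin (k + 1) ρ (Ici 0) t + 2 * iteratedDerivWithin k h (Ici 0) t)
      (w' t) (Ici 0) t := fun t ht =>
    ((hasDerivWithinAt_iteratedDerivWithin hρ (by norm_cast; omega) hs ht).const_mul Z).add
      ((hasDerivWithinAt_iteratedDerivWithin hh (by norm_cast; omega) hs ht).const_mul 2)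
  have hw' : ContinuousOn w' (Ici 0) :=
    (continuousOn_const.mul (hρ.continuousOn_iteratedDerivWithin le_rfl hs)).add
      (continuousOn_const.mul (hh.continuousOn_iteratedDerivWithin le_rfl hs))
  have hD : ∀ r ∈ Ici (0:ℝ), HasDerivWithinAt (iteratedDerivWithin (k + 2) ρ (Ici 0))
      (2 * (iteratedDerivWithin (k + 1) h (Ici 0) r - scaledMoment w' (k + 3) r)) (Ici 0) r :=
    fun r hr => (((hasDerivWithinAt_iteratedDerivWithin hh (by norm_cast; omega) hs hr).sub
      (hasDerivWithinAt_scaledMoment_Ici hw hw' (k + 2) hr)).const_mul 2).congr hk (hk r hr)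
  refine ⟨?_, fun r hr => ?_⟩
  · exact (contDiffOn_nat_succ_iff_contDiffOn_one_iteratedDerivWithin hs).2 ⟨hρ,
      contDiffOn_one_of_hasDerivWithinAt hs hD <| continuousOn_const.mul <|
        (hh.continuousOn_iteratedDerivWithin le_rfl hs).sub (continuousOn_scaledMoment_Ici hw' _)⟩
  · rw [iteratedDerivWithin_succ]
    exact (hD r hr).derivWithin (hs r hr)

theorem HigherDerivIdentity.of_contDiffOn {Z : ℝ} {ρ h : ℝ → ℝ} {k : ℕ}
    (hh : ContDiffOn ℝ k h (Ici 0)) (hρ : ContDiffOn ℝ 2 ρ (Ici 0))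
    (h0 : HigherDerivIdentity Z ρ h 0) :
    ContDiffOn ℝ (k + 2) ρ (Ici 0) ∧ HigherDerivIdentity Z ρ h k := by
  induction k with
  | zero => simpa using ⟨hρ, h0⟩
  | succ k ih =>
    obtain ⟨hρk, hk⟩ := ih (hh.of_le (by norm_cast; omega))
    exact_mod_cast hk.succ (by exact_mod_cast hh) hρk

/-- If `h̃ ∈ C^k([0,∞))` and `ρ̃ ∈ C²([0,∞))` satisfies
`ρ̃''(r) = 2[h̃(r) − ∫₀¹ (Zρ̃'(rσ) + 2h̃(rσ))σ² dσ]` for all `r ≥ 0`, then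
`ρ̃ ∈ C^{k+2}([0,∞))`, the corresponding identity holds for the `(k+2)`-nd derivative, and
`ρ̃^{(k+2)}(0) = (2/(k+3))[(k+1)h̃^{(k)}(0) − Zρ̃^{(k+1)}(0)]`. -/
theorem higher_deriv_formula (k : ℕ) (Z : ℝ) (ρ h : ℝ → ℝ)
    (hh : ContDiffOn ℝ k h (Ici 0))
    (hρ : ContDiffOn ℝ 2 ρ (Ici 0))
    (heq : ∀ r ∈ Ici (0:ℝ),
      iteratedDerivWithin 2 ρ (Ici 0) r =
        2 * (h r - ∫ σ in (0:ℝ)..1,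
          (Z * iteratedDerivWithin 1 ρ (Ici 0) (r*σ) + 2 * h (r*σ)) * σ^2)) :
    ContDiffOn ℝ (k+2) ρ (Ici 0) ∧
    (∀ r ∈ Ici (0:ℝ),
      iteratedDerivWithin (k+2) ρ (Ici 0) r =
        2 * (iteratedDerivWithin k h (Ici 0) r - ∫ σ in (0:ℝ)..1,
          (Z * iteratedDerivWithin (k+1) ρ (Ici 0) (r*σ)
            + 2 * iteratedDerivWithin k h (Ici 0) (r*σ)) * σ^(k+2))) ∧
    iteratedDerivWithin (k+2) ρ (Ici 0) 0 =
      (2 / ((k:ℝ)+3)) * (((k:ℝ)+1) * iteratedDerivWithin k h (Ici 0) 0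
        - Z * iteratedDerivWithin (k+1) ρ (Ici 0) 0) := by
  have h0 : HigherDerivIdentity Z ρ h 0 := fun r hr => by simpa [scaledMoment] using heq r hr
  obtain ⟨hρk, hk⟩ := HigherDerivIdentity.of_contDiffOn hh hρ h0
  refine ⟨hρk, hk, ?_⟩
  rw [hk 0 self_mem_Ici, scaledMoment_zero]
  field_simp
  push_cast
  ring
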